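/- arXiv:1709.09022 — 2 statements merged into one kernel-verified Lean document; each statement's English description precedes it below -/
import Mathlib

section
/- For any m×n real matrix A, b ∈ ℝ^m, and d ∈ ℝ^n, the set S' = {x ∈ ℝ^n : Ax = b, x ≤ d} is max-convex. -/
/-- Max-plus matrix-vector product: `(A ⊗ x)_i = max_j (a_{ij} + x_j)`. -/
noncomputable def mpMul {m n : ℕ} [NeZero n] (A : Fin m → Fin n → ℝ) (x : Fin n → ℝ)
    (i : Fin m) : ℝ :=
  Finset.univ.sup' Finset.univ_nonempty (fun j => A i j + x j)

/-! Max-plus matrices act linearly: `A ⊗ (λ ⊗ x ⊕ μ ⊗ y) = λ ⊗ (A ⊗ x) ⊕ μ ⊗ (A ⊗ y)`,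
so two solutions of `A ⊗ x = b` combine to a solution once `λ ⊕ μ = 0` (the max-plus unit);
the same normalisation gives `λ, μ ≤ 0`, which keeps the combination below `d`. -/

theorem Finset.sup'_sup {α ι : Type*} [SemilatticeSup α] {s : Finset ι} (hs : s.Nonempty)
    (f g : ι → α) : s.sup' hs (f ⊔ g) = s.sup' hs f ⊔ s.sup' hs g :=
  le_antisymm (sup'_le _ _ fun _ hi => sup_le_sup (le_sup' f hi) (le_sup' g hi))
    (sup_le (sup'_mono_fun fun _ _ => le_sup_left) (sup'_mono_fun fun _ _ => le_sup_right))

section MaxPlusLinear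

variable {m n : ℕ} [NeZero n] (A : Fin m → Fin n → ℝ)

theorem mpMul_max (x y : Fin n → ℝ) (i : Fin m) :
    mpMul A (fun j => max (x j) (y j)) i = max (mpMul A x i) (mpMul A y i) := by
  simp only [mpMul, ← max_add_add_left]
  exact Finset.sup'_sup _ _ _

theorem mpMul_const_add (c : ℝ) (x : Fin n → ℝ) (i : Fin m) :
    mpMul A (fun j => c + x j) i = c + mpMul A x i := by
  simp only [mpMul, Finset.add_sup', add_left_comm c]

theorem mpMul_max_const_add (lam mu : ℝ) (x y : Fin n → ℝ) (i : Fin m) :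
    mpMul A (fun j => max (lam + x j) (mu + y j)) i =
      max (lam + mpMul A x i) (mu + mpMul A y i) := by
  rw [← mpMul_const_add, ← mpMul_const_add, ← mpMul_max]

end MaxPlusLinear

theorem mpMul_boundedSolutionSet_maxConvex {m n : ℕ} [NeZero n]
    (A : Fin m → Fin n → ℝ) (b : Fin m → ℝ) (d : Fin n → ℝ)
    (x y : Fin n → ℝ)
    (hx : (∀ i, mpMul A x i = b i) ∧ ∀ j, x j ≤ d j)
    (hy : (∀ i, mpMul A y i = b i) ∧ ∀ j, y j ≤ d j)
    (lam mu : ℝ) (hlm : max lam mu = 0) :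
    (∀ i, mpMul A (fun j => max (lam + x j) (mu + y j)) i = b i) ∧
      ∀ j, max (lam + x j) (mu + y j) ≤ d j := by
  have hlam : lam ≤ 0 := hlm ▸ le_max_left lam mu
  have hmu : mu ≤ 0 := hlm ▸ le_max_right lam mu
  refine ⟨fun i => ?_, fun j => max_le ?_ ?_⟩
  · rw [mpMul_max_const_add, hx.1 i, hy.1 i, max_add_add_right, hlm, zero_add]
  · linarith [hx.2 j]
  · linarith [hy.2 j]
end

section
/- Let A be a 2×n real matrix. Then the image Im(A) = {Ax : x ∈ ℝ^n} equals {(y₁, y₂) ∈ ℝ² : α̲ ≤ y₂ - y₁ ≤ ᾱ}, where α̲ = min_j (a_{2j} - a_{1j}) and ᾱ = max_j (a_{2j} - a_{1j}). -/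
open Finset

section

variable {m n : ℕ} [NeZero n] (A : Fin m → Fin n → ℝ)

theorem add_le_mpMul (x : Fin n → ℝ) (i : Fin m) (j : Fin n) : A i j + x j ≤ mpMul A x i :=
  le_sup' (fun j => A i j + x j) (mem_univ j)

theorem exists_mpMul_eq_add (x : Fin n → ℝ) (i : Fin m) : ∃ j, mpMul A x i = A i j + x j := by
  obtain ⟨j, -, hj⟩ := exists_mem_eq_sup' univ_nonempty (fun j => A i j + x j)
  exact ⟨j, hj⟩

theorem exists_mpMul_sub_mpMul_le (x : Fin n → ℝ) (i i' : Fin m) :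
    ∃ k, mpMul A x i' - mpMul A x i ≤ A i' k - A i k := by
  obtain ⟨k, hk⟩ := exists_mpMul_eq_add A x i'
  exact ⟨k, by linarith [add_le_mpMul A x i k]⟩

variable [NeZero m]

noncomputable def principalSolution (y : Fin m → ℝ) (j : Fin n) : ℝ :=
  univ.inf' univ_nonempty (fun i => y i - A i j)

theorem mpMul_principalSolution_le (y : Fin m → ℝ) (i : Fin m) :
    mpMul A (principalSolution A y) i ≤ y i :=
  sup'_le _ _ fun j _ => by
    have : principalSolution A y j ≤ y i - A i j := inf'_le _ (mem_univ i)
    linarith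

theorem mpMul_principalSolution_eq {y : Fin m → ℝ} {i : Fin m} (j : Fin n)
    (hj : ∀ i', y i - A i j ≤ y i' - A i' j) : mpMul A (principalSolution A y) i = y i := by
  refine (mpMul_principalSolution_le A y i).antisymm ?_
  have hx : y i - A i j ≤ principalSolution A y j := le_inf' _ _ fun i' _ => hj i'
  linarith [add_le_mpMul A (principalSolution A y) i j]

end

theorem image_of_two_row_matrix {n : ℕ} [NeZero n]
    (A : Fin 2 → Fin n → ℝ)
    (alow ahigh : ℝ)
    (hlow : alow = Finset.univ.inf' Finset.univ_nonempty (fun j => A 1 j - A 0 j))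
    (hhigh : ahigh = Finset.univ.sup' Finset.univ_nonempty (fun j => A 1 j - A 0 j)) :
    {y : Fin 2 → ℝ | ∃ x : Fin n → ℝ, ∀ i, mpMul A x i = y i} =
      {y : Fin 2 → ℝ | alow ≤ y 1 - y 0 ∧ y 1 - y 0 ≤ ahigh} := by
  subst hlow hhigh
  ext y
  constructor
  · rintro ⟨x, hx⟩
    obtain rfl : mpMul A x = y := funext hx
    obtain ⟨k, hk⟩ := exists_mpMul_sub_mpMul_le A x 0 1
    obtain ⟨l, hl⟩ := exists_mpMul_sub_mpMul_le A x 1 0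
    exact ⟨(inf'_le _ (mem_univ l)).trans (by linarith), hk.trans (le_sup' (fun j => A 1 j - A 0 j) (mem_univ k))⟩
  · rintro ⟨hlow, hhigh⟩
    obtain ⟨k, -, hk⟩ := exists_mem_eq_inf' univ_nonempty (fun j => A 1 j - A 0 j)
    obtain ⟨l, -, hl⟩ := exists_mem_eq_sup' univ_nonempty (fun j => A 1 j - A 0 j)
    refine ⟨principalSolution A y, Fin.forall_fin_two.2 ⟨?_, ?_⟩⟩
    · exact mpMul_principalSolution_eq A k (Fin.forall_fin_two.2 ⟨le_rfl, by linarith⟩)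
    · exact mpMul_principalSolution_eq A l (Fin.forall_fin_two.2 ⟨by linarith, le_rfl⟩)
end
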